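/- arXiv:0710.3267 — 5 statements merged into one kernel-verified Lean document; each statement's English description precedes it below -/
import Mathlib

section
/- Let G be a finite group, M a subgroup of G, and s an element of G. Then n·|s^G| = c·|s^G ∩ M|, where n is the number of G-conjugates of M that contain s, c is the total number of G-conjugates of M, and s^G denotes the conjugacy class of s in G. -/
open MulAction Pointwise

private lemma aux_count {G X : Type*} [Group G] [MulAction G X] (x : X) (P : Set X)
    (hP : P ⊆ MulAction.orbit G x) :
    Nat.card {g : G // g • x ∈ P} = Nat.card P * Nat.card (MulAction.stabilizer G x) := by
  classical
  have hsel : ∀ p : P, ∃ g : G, g • x = (p : X) := fun p => MulAction.mem_orbit_iff.mp (hP p.2)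
  choose σ hσ using hsel
  have e : {g : G // g • x ∈ P} ≃ P × MulAction.stabilizer G x :=
  { toFun := fun g => (⟨g.1 • x, g.2⟩, ⟨(σ ⟨g.1 • x, g.2⟩)⁻¹ * g.1, by
      have := hσ ⟨g.1 • x, g.2⟩
      simp only [MulAction.mem_stabilizer_iff, mul_smul, inv_smul_eq_iff, this]⟩)
    invFun := fun ph => ⟨σ ph.1 * ph.2.1, by
      have h1 : (σ ph.1 * (ph.2.1 : G)) • x = (ph.1 : X) := by
        rw [mul_smul, ph.2.2, hσ]
      rw [h1]; exact ph.1.2⟩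
    left_inv := by
      rintro ⟨g, hg⟩
      simp only [Subtype.mk.injEq]
      rw [mul_inv_cancel_left]
    right_inv := by
      rintro ⟨p, h⟩
      have h1 : (σ p * (h : G)) • x = (p : X) := by rw [mul_smul, h.2, hσ]
      have hp : (⟨(σ p * (h : G)) • x, by rw [h1]; exact p.2⟩ : P) = p := Subtype.ext h1
      refine Prod.ext hp ?_
      refine Subtype.ext ?_
      simp only []
      rw [hp, inv_mul_cancel_left] }
  rw [Nat.card_congr e, Nat.card_prod]

private lemma conj_smul_eq {G : Type*} [Group G] (h : G) (M : Subgroup G) :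
    ConjAct.toConjAct h • M = Subgroup.map (MulAut.conj h).toMonoidHom M := by
  ext x
  rw [Subgroup.mem_pointwise_smul_iff_inv_smul_mem, Subgroup.mem_map]
  simp only [ConjAct.smul_def, map_inv, ConjAct.ofConjAct_toConjAct, MulEquiv.coe_toMonoidHom,
    MulAut.conj_apply]
  constructor
  · intro hx
    exact ⟨h⁻¹ * x * h⁻¹⁻¹, hx, by group⟩
  · rintro ⟨m, hm, rfl⟩
    simpa [mul_assoc] using hm

private lemma orbit_stab_card {G X : Type*} [Group G] [Finite G] [MulAction G X] (x : X) :
    Nat.card (MulAction.orbit G x) * Nat.card (MulAction.stabilizer G x) = Nat.card G := by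
  rw [Nat.card_congr (MulAction.orbitEquivQuotientStabilizer G x)]
  exact (Subgroup.card_eq_card_quotient_mul_card_subgroup (MulAction.stabilizer G x)).symm

/-- For a finite group `G`, a subgroup `M` and `s ∈ G`:
`n * |s^G| = c * |s^G ∩ M|`, where `n` is the number of `G`-conjugates of `M`
containing `s` and `c` is the total number of `G`-conjugates of `M`. -/
theorem stmt_1 {G : Type*} [Group G] [Fintype G] (M : Subgroup G) (s : G) :
    Nat.card {N : Subgroup G //
        (∃ h : G, N = Subgroup.map (MulAut.conj h).toMonoidHom M) ∧ s ∈ N} *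
      Nat.card {x : G // ∃ h : G, x = h * s * h⁻¹} =
    Nat.card {N : Subgroup G // ∃ h : G, N = Subgroup.map (MulAut.conj h).toMonoidHom M} *
      Nat.card {x : G // (∃ h : G, x = h * s * h⁻¹) ∧ x ∈ M} := by
  classical
  have hconj : ∀ N : Subgroup G,
      (∃ h : G, N = Subgroup.map (MulAut.conj h).toMonoidHom M) ↔
        N ∈ MulAction.orbit (ConjAct G) M := by
    intro N
    constructor
    · rintro ⟨h, rfl⟩
      exact ⟨ConjAct.toConjAct h, (conj_smul_eq h M)⟩
    · rintro ⟨g, rfl⟩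
      exact ⟨ConjAct.ofConjAct g, by rw [← conj_smul_eq, ConjAct.toConjAct_ofConjAct]⟩
  have hcls : ∀ x : G, (∃ h : G, x = h * s * h⁻¹) ↔ x ∈ MulAction.orbit (ConjAct G) s := by
    intro x
    constructor
    · rintro ⟨h, rfl⟩
      exact ⟨ConjAct.toConjAct h, by simp [ConjAct.smul_def]⟩
    · rintro ⟨g, rfl⟩
      exact ⟨ConjAct.ofConjAct g, by simp [ConjAct.smul_def]⟩
  set PA : Set (Subgroup G) := {N | N ∈ MulAction.orbit (ConjAct G) M ∧ s ∈ N} with hPA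
  set PD : Set G := {x | x ∈ MulAction.orbit (ConjAct G) s ∧ x ∈ M} with hPD
  have eA : Nat.card {N : Subgroup G //
      (∃ h : G, N = Subgroup.map (MulAut.conj h).toMonoidHom M) ∧ s ∈ N} = Nat.card PA :=
    Nat.card_congr (Equiv.subtypeEquivRight fun N => by
      simp only [hPA, Set.mem_setOf_eq, hconj N])
  have eB : Nat.card {x : G // ∃ h : G, x = h * s * h⁻¹} =
      Nat.card (MulAction.orbit (ConjAct G) s) :=
    Nat.card_congr (Equiv.subtypeEquivRight fun x => hcls x)
  have eC : Nat.card {N : Subgroup G // ∃ h : G, N = Subgroup.map (MulAut.conj h).toMonoidHom M} =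
      Nat.card (MulAction.orbit (ConjAct G) M) :=
    Nat.card_congr (Equiv.subtypeEquivRight fun N => hconj N)
  have eD : Nat.card {x : G // (∃ h : G, x = h * s * h⁻¹) ∧ x ∈ M} = Nat.card PD :=
    Nat.card_congr (Equiv.subtypeEquivRight fun x => by
      simp only [hPD, Set.mem_setOf_eq, hcls x])
  rw [eA, eB, eC, eD]
  have h1 : Nat.card {g : ConjAct G // g • M ∈ PA} =
      Nat.card PA * Nat.card (MulAction.stabilizer (ConjAct G) M) :=
    aux_count M PA fun N hN => hN.1
  have h2 : Nat.card {g : ConjAct G // g • s ∈ PD} =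
      Nat.card PD * Nat.card (MulAction.stabilizer (ConjAct G) s) :=
    aux_count s PD fun x hx => hx.1
  have h3 : Nat.card {g : ConjAct G // g • M ∈ PA} =
      Nat.card {g : ConjAct G // g • s ∈ PD} := by
    refine Nat.card_congr (Equiv.subtypeEquiv (Equiv.inv (ConjAct G)) fun g => ?_)
    simp only [hPA, hPD, Set.mem_setOf_eq, Equiv.inv_apply]
    constructor
    · rintro ⟨-, hs⟩
      exact ⟨MulAction.mem_orbit s g⁻¹, Subgroup.mem_pointwise_smul_iff_inv_smul_mem.mp hs⟩
    · rintro ⟨-, hs⟩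
      exact ⟨MulAction.mem_orbit M g, Subgroup.mem_pointwise_smul_iff_inv_smul_mem.mpr hs⟩
  have hOB : Nat.card (MulAction.orbit (ConjAct G) s) *
      Nat.card (MulAction.stabilizer (ConjAct G) s) = Nat.card (ConjAct G) :=
    orbit_stab_card s
  have hOC : Nat.card (MulAction.orbit (ConjAct G) M) *
      Nat.card (MulAction.stabilizer (ConjAct G) M) = Nat.card (ConjAct G) :=
    orbit_stab_card M
  have hpos : 0 < Nat.card (ConjAct G) := Nat.card_pos
  apply Nat.eq_of_mul_eq_mul_right hpos
  calc Nat.card PA * Nat.card (MulAction.orbit (ConjAct G) s) * Nat.card (ConjAct G)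
      = Nat.card (MulAction.orbit (ConjAct G) s) * Nat.card (MulAction.orbit (ConjAct G) M) *
          (Nat.card PA * Nat.card (MulAction.stabilizer (ConjAct G) M)) := by
        rw [← hOC]; ring
    _ = Nat.card (MulAction.orbit (ConjAct G) s) * Nat.card (MulAction.orbit (ConjAct G) M) *
          (Nat.card PD * Nat.card (MulAction.stabilizer (ConjAct G) s)) := by
        rw [← h1, ← h2, h3]
    _ = Nat.card (MulAction.orbit (ConjAct G) M) * Nat.card PD *
          (Nat.card (MulAction.orbit (ConjAct G) s) *
            Nat.card (MulAction.stabilizer (ConjAct G) s)) := by ring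
    _ = Nat.card (MulAction.orbit (ConjAct G) M) * Nat.card PD * Nat.card (ConjAct G) := by
        rw [hOB]
end

section
/- Let G be a nontrivial finite group, s ∈ G, and suppose that M is the unique maximal subgroup of G containing s (that is, M is maximal, s ∈ M, and every maximal subgroup of G containing s equals M). Let x₁, …, x_k ∈ G. Then there exists a conjugate s' of s with ⟨x_i, s'⟩ = G for all 1 ≤ i ≤ k if and only if the fixed-point sets of x₁, …, x_k on G/M do not cover G/M, i.e., there is a left coset y ∈ G/M with x_i·y ≠ y for all i. -/
/-!
Since `M` is the only maximal subgroup containing `s`, a pair `{g, s}` generates `G` exactly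
when `g ∉ M`. Conjugating by `c`, the pair `{g, c⁻¹ s c}` generates `G` exactly when
`c g c⁻¹ ∉ M`, i.e. when `g` does not fix the coset `c⁻¹ M`; every coset has this form.
-/

open Subgroup

theorem closure_pair_eq_top_iff_notMem_of_unique_coatom {G : Type*} [Group G]
    [IsCoatomic (Subgroup G)] {s : G} {M : Subgroup G} (hmax : IsCoatom M) (hs : s ∈ M)
    (huniq : ∀ N : Subgroup G, IsCoatom N → s ∈ N → N = M) (g : G) :
    closure {g, s} = ⊤ ↔ g ∉ M := by
  constructor
  · intro htop hg
    refine hmax.1 (top_le_iff.mp ?_)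
    rw [← htop, closure_le]
    exact Set.insert_subset hg (Set.singleton_subset_iff.mpr hs)
  · intro hg
    by_contra hne
    obtain ⟨K, hK, hle⟩ := (eq_top_or_exists_le_coatom (closure {g, s})).resolve_left hne
    have hKM : K = M := huniq K hK (hle (subset_closure (by simp)))
    exact hg (hKM ▸ hle (subset_closure (by simp)))

theorem closure_pair_conj_eq_top_iff {G : Type*} [Group G] (c g s : G) :
    closure {g, c⁻¹ * s * c} = ⊤ ↔ closure {c * g * c⁻¹, s} = ⊤ := by
  have hmap : (closure {g, c⁻¹ * s * c}).map (MulAut.conj c : G →* G)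
      = closure {c * g * c⁻¹, s} := by
    rw [MonoidHom.map_closure, Set.image_pair]
    simp [mul_assoc]
  rw [← hmap]
  exact (map_eq_top_iff (MulAut.conj c).mapSubgroup).symm

theorem smul_coe_eq_coe_iff {G : Type*} [Group G] (M : Subgroup G) (g a : G) :
    g • (a : G ⧸ M) = a ↔ a⁻¹ * g * a ∈ M := by
  rw [MulAction.Quotient.smul_coe, QuotientGroup.eq, ← M.inv_mem_iff]
  simp [mul_assoc]

theorem stmt_5_general {G : Type*} [Group G] [Fintype G]
    (s : G) (M : Subgroup G) (hmax : IsCoatom M) (hs : s ∈ M)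
    (huniq : ∀ N : Subgroup G, IsCoatom N → s ∈ N → N = M)
    (k : ℕ) (x : Fin k → G) :
    (∃ c : G, ∀ i, Subgroup.closure {x i, c⁻¹ * s * c} = ⊤) ↔
      ∃ y : G ⧸ M, ∀ i, x i • y ≠ y := by
  simp_rw [closure_pair_conj_eq_top_iff,
    closure_pair_eq_top_iff_notMem_of_unique_coatom hmax hs huniq,
    QuotientGroup.mk_surjective.exists, Ne, smul_coe_eq_coe_iff]
  exact (Equiv.inv G).exists_congr fun c => by simp only [Equiv.inv_apply, inv_inv]

/-- Let `G` be a nontrivial finite group, `s ∈ G`, and `M` the unique maximal subgroup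
of `G` containing `s`. For `x₁, …, x_k ∈ G`, there is a conjugate `s'` of `s` with
`⟨x i, s'⟩ = G` for all `i` if and only if the fixed-point sets of the `x i` on `G ⧸ M`
do not cover `G ⧸ M`. -/
theorem stmt_5 {G : Type*} [Group G] [Fintype G] [Nontrivial G]
    (s : G) (M : Subgroup G) (hmax : IsCoatom M) (hs : s ∈ M)
    (huniq : ∀ N : Subgroup G, IsCoatom N → s ∈ N → N = M)
    (k : ℕ) (x : Fin k → G) :
    (∃ c : G, ∀ i, Subgroup.closure {x i, c⁻¹ * s * c} = ⊤) ↔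
      ∃ y : G ⧸ M, ∀ i, x i • y ≠ y :=
  stmt_5_general s M hmax hs huniq k x
end

section
/- Let G be a finite simple group acting on a finite set X such that every element of G fixes at least one point of X, but no point of X is fixed by all elements of G. If x₁, …, x_k ∈ G are elements such that every point of X is fixed by at least one x_i, then for every s ∈ G there is some i with ⟨x_i, s⟩ ≠ G. -/
/-- Let `G` be a finite simple group acting on a finite set `X` such that every element
of `G` fixes a point of `X` but no point of `X` is fixed by all of `G`. If every point
of `X` is fixed by one of `x₁, …, x_k ∈ G`, then for every `s ∈ G` some `x i` generates
a proper subgroup together with `s`. -/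
theorem stmt_6 {G X : Type*} [Group G] [Finite G] [IsSimpleGroup G]
    [Finite X] [MulAction G X]
    (h1 : ∀ g : G, ∃ p : X, g • p = p)
    (h2 : ∀ p : X, ∃ g : G, g • p ≠ p)
    (k : ℕ) (x : Fin k → G)
    (hcover : ∀ p : X, ∃ i, x i • p = p) :
    ∀ s : G, ∃ i, Subgroup.closure {x i, s} ≠ ⊤ := by
  intro s
  obtain ⟨p, hp⟩ := h1 s
  obtain ⟨i, hi⟩ := hcover p
  refine ⟨i, fun htop => ?_⟩
  obtain ⟨g, hg⟩ := h2 p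
  apply hg
  have hsub : Subgroup.closure {x i, s} ≤ MulAction.stabilizer G p := by
    rw [Subgroup.closure_le]
    rintro y (rfl | rfl) <;> simpa [MulAction.mem_stabilizer_iff]
  have : g ∈ MulAction.stabilizer G p := hsub (htop ▸ Subgroup.mem_top g)
  exact this
end

section
/- In the alternating group A₅ on the five points {1,…,5}, every element generates a proper subgroup together with at least one of the three double transpositions (1,2)(3,4), (1,3)(2,4), (1,4)(2,3): for every σ ∈ A₅ there is τ ∈ {(1,2)(3,4), (1,3)(2,4), (1,4)(2,3)} such that ⟨σ, τ⟩ ≠ A₅. -/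
/-!
Points are labelled `0, …, 4`. The three double transpositions fix `4` and act regularly on
`{0, 1, 2, 3}`. If `σ ∈ A₅` fixes `4`, or is a 3-cycle or a double transposition moving `4`
(and so fixes or swaps two points of `{0, 1, 2, 3}`), then `σ` and a suitable `τ` both
stabilize `{4}` or such a pair, whereas `A₅` stabilizes no nonempty proper subset. Otherwise `σ`
is a 5-cycle, inverted by the reflection of its pentagon through `4`, which is one of the `τ`;
then `⟨σ, τ⟩` normalizes `⟨σ⟩`, which is neither trivial nor all of the simple group `A₅`.
-/

open Equiv Pointwise Subgroup MulAction

theorem Subgroup.eq_bot_or_eq_of_le_normalizer {G : Type*} [Group G] {H K : Subgroup G}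
    [IsSimpleGroup H] (hKH : K ≤ H) (hN : H ≤ normalizer K) : K = ⊥ ∨ K = H := by
  rcases ((normal_subgroupOf_iff_le_normalizer hKH).mpr hN).eq_bot_or_eq_top with h | h
  · exact .inl (disjoint_iff.mp (subgroupOf_eq_bot.mp h) ▸ (inf_eq_left.mpr hKH).symm)
  · exact .inr (le_antisymm hKH (subgroupOf_eq_top.mp h))

theorem Subgroup.mem_normalizer_zpowers_of_conj_eq_inv {G : Type*} [Group G] {g x : G}
    (h : g * x * g⁻¹ = x⁻¹) : g ∈ normalizer (zpowers x) := by
  rw [mem_normalizer_iff_map_conj_eq, MonoidHom.map_zpowers]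
  exact (congrArg zpowers h).trans zpowers_inv

theorem alternatingGroup.not_le_stabilizer_finset {α : Type*} [Fintype α] [DecidableEq α]
    (hα : 3 ≤ Nat.card α) {s : Finset α} (hs : s.Nonempty) (hs' : s ≠ Finset.univ) :
    ¬ alternatingGroup α ≤ stabilizer (Perm α) s := by
  intro hle
  obtain ⟨a, ha⟩ := hs
  obtain ⟨b, hb⟩ : ∃ b, b ∉ s := by simpa [Finset.eq_univ_iff_forall] using hs'
  have := alternatingGroup.isPretransitive_of_three_le_card α hα
  obtain ⟨g, hg⟩ := exists_smul_eq (alternatingGroup α) a b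
  have hgs : (g : Perm α) • s = s := hle g.2
  exact hb (hg ▸ hgs ▸ Finset.smul_mem_smul_finset ha)

abbrev kleinInvolutions : Set (Perm (Fin 5)) :=
  {swap 0 1 * swap 2 3, swap 0 2 * swap 1 3, swap 0 3 * swap 1 2}

set_option maxRecDepth 10000 in
theorem exists_kleinInvolution_stabilizing_or_pow_five_eq_one :
    ∀ σ : Perm (Fin 5), Perm.sign σ = 1 →
      (∃ τ ∈ kleinInvolutions, ∃ s : Finset (Fin 5), s.Nonempty ∧ s ≠ Finset.univ ∧
        σ • s = s ∧ τ • s = s) ∨ (σ ≠ 1 ∧ σ ^ 5 = 1) := by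
  decide

set_option maxRecDepth 10000 in
theorem exists_kleinInvolution_conj_eq_inv :
    ∀ σ : Perm (Fin 5), σ ^ 5 = 1 → ∃ τ ∈ kleinInvolutions, τ * σ * τ⁻¹ = σ⁻¹ := by
  decide

theorem closure_ne_alternatingGroup_of_conj_eq_inv {σ τ : Perm (Fin 5)}
    (hσ : σ ∈ alternatingGroup (Fin 5)) (h1 : σ ≠ 1) (h5 : σ ^ 5 = 1)
    (hτ : τ * σ * τ⁻¹ = σ⁻¹) : closure {σ, τ} ≠ alternatingGroup (Fin 5) := by
  intro h
  have := alternatingGroup.isSimpleGroup (α := Fin 5) (by simp)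
  have hN : alternatingGroup (Fin 5) ≤ normalizer (zpowers σ) :=
    h ▸ closure_le _ |>.mpr (Set.pair_subset (le_normalizer (mem_zpowers σ))
      (mem_normalizer_zpowers_of_conj_eq_inv hτ))
  rcases eq_bot_or_eq_of_le_normalizer (zpowers_le.mpr hσ) hN with hbot | htop
  · exact h1 (zpowers_eq_bot.mp hbot)
  · have hc : swap 0 1 * swap 1 2 ∈ zpowers σ :=
      htop ▸ Perm.mem_alternatingGroup.mpr (by decide)
    obtain ⟨k, hk⟩ := mem_zpowers_iff.mp hc
    have hc5 : (swap 0 1 * swap 1 2 : Perm (Fin 5)) ^ 5 = 1 := by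
      rw [← hk, ← zpow_natCast, ← zpow_mul, mul_comm, zpow_mul, zpow_natCast, h5, one_zpow]
    exact absurd hc5 (by decide)

/-- In the alternating group `A₅` on five points, every element generates a proper
subgroup together with at least one of the three double transpositions
`(1,2)(3,4)`, `(1,3)(2,4)`, `(1,4)(2,3)`. -/
theorem stmt_7 :
    ∀ σ ∈ alternatingGroup (Fin 5),
      ∃ τ ∈ ({Equiv.swap 0 1 * Equiv.swap 2 3,
              Equiv.swap 0 2 * Equiv.swap 1 3,
              Equiv.swap 0 3 * Equiv.swap 1 2} : Set (Equiv.Perm (Fin 5))),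
        Subgroup.closure {σ, τ} ≠ alternatingGroup (Fin 5) := by
  intro σ hσ
  rcases exists_kleinInvolution_stabilizing_or_pow_five_eq_one σ hσ with
    ⟨τ, hτ, s, hs, hs', hσs, hτs⟩ | ⟨h1, h5⟩
  · refine ⟨τ, hτ, fun h ↦ alternatingGroup.not_le_stabilizer_finset (by simp) hs hs' ?_⟩
    exact h ▸ closure_le _ |>.mpr (Set.pair_subset hσs hτs)
  · obtain ⟨τ, hτ, hinv⟩ := exists_kleinInvolution_conj_eq_inv σ h5
    exact ⟨τ, hτ, closure_ne_alternatingGroup_of_conj_eq_inv hσ h1 h5 hinv⟩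
end

section
/- In the alternating group A₆ on the six points {1,…,6}, every element generates a proper subgroup together with at least one of the three double transpositions (1,2)(3,4), (1,3)(2,4), (1,4)(2,3): for every σ ∈ A₆ there is τ ∈ {(1,2)(3,4), (1,3)(2,4), (1,4)(2,3)} such that ⟨σ, τ⟩ ≠ A₆. -/
open Equiv Equiv.Perm

set_option maxRecDepth 40000

abbrev P6 := Equiv.Perm (Fin 6)

def mkInv (f : Fin 6 → Fin 6) (h : ∀ x, f (f x) = x := by decide) : P6 :=
  ⟨f, f, h, h⟩

def m0 : P6 := mkInv ![1, 0, 3, 2, 5, 4]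
def m1 : P6 := mkInv ![1, 0, 4, 5, 2, 3]
def m2 : P6 := mkInv ![1, 0, 5, 4, 3, 2]
def m3 : P6 := mkInv ![2, 3, 0, 1, 5, 4]
def m4 : P6 := mkInv ![2, 4, 0, 5, 1, 3]
def m5 : P6 := mkInv ![2, 5, 0, 4, 3, 1]
def m6 : P6 := mkInv ![3, 2, 1, 0, 5, 4]
def m7 : P6 := mkInv ![3, 4, 5, 0, 1, 2]
def m8 : P6 := mkInv ![3, 5, 4, 0, 2, 1]
def m9 : P6 := mkInv ![4, 2, 1, 5, 0, 3]
def m10 : P6 := mkInv ![4, 3, 5, 1, 0, 2]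
def m11 : P6 := mkInv ![4, 5, 3, 2, 0, 1]
def m12 : P6 := mkInv ![5, 2, 1, 4, 3, 0]
def m13 : P6 := mkInv ![5, 3, 4, 1, 2, 0]
def m14 : P6 := mkInv ![5, 4, 3, 2, 1, 0]

/-- even witnesses (3-cycles) -/
def w02 : P6 := Equiv.swap 0 1 * Equiv.swap 0 2
def w04 : P6 := Equiv.swap 0 1 * Equiv.swap 0 4
def w05 : P6 := Equiv.swap 0 1 * Equiv.swap 0 5

/-- point / 2-set stabilizer structures, with properness witnesses -/
def SP : List (List (Fin 6) × P6) :=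
  [([4], w04), ([5], w05), ([0, 1], w02), ([2, 3], w02), ([4, 5], w04)]

/-- 3|3-partition structures: (half, other half, witness) -/
def SQ : List (List (Fin 6) × List (Fin 6) × P6) :=
  [([0, 1, 4], [2, 3, 5], w02), ([0, 1, 5], [2, 3, 4], w02),
   ([0, 2, 4], [1, 3, 5], w02), ([0, 2, 5], [1, 3, 4], w02),
   ([0, 3, 4], [1, 2, 5], w02), ([0, 3, 5], [1, 2, 4], w02)]

/-- conjugation-stabilized sets of permutations: single matchings and totals -/
def SC : List (List P6 × P6) :=
  [([m0], w02), ([m3], w02), ([m6], w02),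
   ([m0, m4, m8, m10, m12], w02),
   ([m0, m5, m7, m9, m13], w02),
   ([m1, m3, m7, m11, m12], w02),
   ([m1, m5, m6, m10, m14], w02),
   ([m2, m3, m8, m9, m14], w02),
   ([m2, m4, m6, m11, m13], w02)]

/-- cheap pointwise equality test for permutations -/
def eq6 (a b : P6) : Bool := (List.finRange 6).all fun x => decide (a x = b x)

def okPb (g : P6) (s : List (Fin 6)) : Bool := s.all fun i => decide (g i ∈ s)

def okQb (g : P6) (s t : List (Fin 6)) : Bool :=
  (s.all fun i => decide (g i ∈ s)) || (s.all fun i => decide (g i ∈ t))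

def okCb (g : P6) (T : List P6) : Bool :=
  T.all fun m => T.any fun n => eq6 (g * m) (n * g)

def goodb (σ τ : P6) : Bool :=
  (SP.any fun p => okPb σ p.1 && okPb τ p.1) ||
  (SQ.any fun p => okQb σ p.1 p.2.1 && okQb τ p.1 p.2.1) ||
  (SC.any fun p => okCb σ p.1 && okCb τ p.1)

def ta : P6 := Equiv.swap 0 1 * Equiv.swap 2 3
def tb : P6 := Equiv.swap 0 2 * Equiv.swap 1 3
def tc : P6 := Equiv.swap 0 3 * Equiv.swap 1 2

set_option maxHeartbeats 12000000 in
/-- The big finite verification. -/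
lemma key : ∀ σ : P6, Equiv.Perm.sign σ = 1 →
    (goodb σ ta || goodb σ tb || goodb σ tc) = true := by decide

/-! ### Stabilizer subgroups -/

def stabP (s : Finset (Fin 6)) : Subgroup P6 where
  carrier := {g | s.image g = s}
  one_mem' := by simp
  mul_mem' := by
    intro g h hg hh
    show s.image ⇑(g * h) = s
    have e : ⇑(g * h) = ⇑g ∘ ⇑h := rfl
    rw [e, ← Finset.image_image, hh, hg]
  inv_mem' := by
    intro g hg
    show s.image ⇑g⁻¹ = s
    conv_lhs => rw [← hg]
    rw [Finset.image_image]
    have e : ⇑g⁻¹ ∘ ⇑g = id := by funext x; simp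
    rw [e, Finset.image_id]

lemma image_compl (g : P6) (s : Finset (Fin 6)) :
    sᶜ.image ⇑g = (s.image ⇑g)ᶜ := by
  have key : ∀ (t : Finset (Fin 6)) (x : Fin 6), x ∈ t.image ⇑g ↔ g⁻¹ x ∈ t := by
    intro t x
    constructor
    · rintro h
      rcases Finset.mem_image.1 h with ⟨y, hy, rfl⟩
      simpa using hy
    · intro h
      exact Finset.mem_image.2 ⟨g⁻¹ x, h, by simp⟩
  ext x
  rw [key, Finset.mem_compl, Finset.mem_compl, key]

def stabQ (s : Finset (Fin 6)) : Subgroup P6 where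
  carrier := {g | s.image g = s ∨ s.image g = sᶜ}
  one_mem' := by simp
  mul_mem' := by
    intro g h hg hh
    show s.image ⇑(g * h) = s ∨ s.image ⇑(g * h) = sᶜ
    have e : ⇑(g * h) = ⇑g ∘ ⇑h := rfl
    rw [e, ← Finset.image_image]
    rcases hh with hh | hh
    · rw [hh]; exact hg
    · rw [hh, image_compl]
      rcases hg with hg | hg
      · rw [hg]; right; rfl
      · rw [hg, compl_compl]; left; rfl
  inv_mem' := by
    intro g hg
    show s.image ⇑g⁻¹ = s ∨ s.image ⇑g⁻¹ = sᶜ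
    have inv_img : ∀ t : Finset (Fin 6), (t.image ⇑g).image ⇑g⁻¹ = t := by
      intro t
      rw [Finset.image_image]
      have e : ⇑g⁻¹ ∘ ⇑g = id := by funext x; simp
      rw [e, Finset.image_id]
    rcases hg with hg | hg
    · left; conv_lhs => rw [← hg]
      exact inv_img s
    · right
      have h1 : sᶜ.image ⇑g⁻¹ = s := by
        conv_lhs => rw [← hg]
        exact inv_img s
      have h2 := image_compl g⁻¹ sᶜ
      rw [h1, compl_compl] at h2
      exact h2

def conjMap (g : P6) : P6 → P6 := fun m => g * m * g⁻¹

lemma conjMap_comp (g h : P6) : conjMap g ∘ conjMap h = conjMap (g * h) := by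
  funext m
  simp [conjMap, mul_assoc]

def stabC (T : Finset P6) : Subgroup P6 where
  carrier := {g | T.image (conjMap g) = T}
  one_mem' := by
    show T.image (conjMap 1) = T
    have e : conjMap 1 = id := by funext m; simp [conjMap]
    rw [e, Finset.image_id]
  mul_mem' := by
    intro g h hg hh
    show T.image (conjMap (g * h)) = T
    rw [← conjMap_comp, ← Finset.image_image]
    rw [show T.image (conjMap h) = T from hh]
    exact hg
  inv_mem' := by
    intro g hg
    show T.image (conjMap g⁻¹) = T
    conv_lhs => rw [← hg]
    rw [Finset.image_image, conjMap_comp]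
    have e : conjMap (g⁻¹ * g) = id := by funext m; simp [conjMap]
    rw [e, Finset.image_id]

/-! ### Bridges from the boolean conditions to stabilizer membership -/

lemma memP_of_subset {g : P6} {s : Finset (Fin 6)} (h : ∀ i ∈ s, g i ∈ s) :
    g ∈ stabP s := by
  show s.image ⇑g = s
  apply Finset.eq_of_subset_of_card_le
  · intro x hx
    rcases Finset.mem_image.1 hx with ⟨y, hy, rfl⟩
    exact h y hy
  · rw [Finset.card_image_of_injective _ g.injective]

lemma memP_of_okPb {g : P6} {s : List (Fin 6)} (h : okPb g s = true) :
    g ∈ stabP s.toFinset := by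
  apply memP_of_subset
  intro i hi
  rw [List.mem_toFinset] at hi ⊢
  have := List.all_eq_true.1 h i hi
  exact of_decide_eq_true this

lemma memQ_of_okQb {g : P6} {s t : List (Fin 6)} (hc : s.toFinsetᶜ = t.toFinset)
    (hcard : (s.toFinset)ᶜ.card ≤ s.toFinset.card)
    (h : okQb g s t = true) : g ∈ stabQ s.toFinset := by
  unfold okQb at h
  rcases (Bool.or_eq_true _ _).mp h with h | h
  · left
    exact memP_of_subset fun i hi => by
      rw [List.mem_toFinset] at hi ⊢
      exact of_decide_eq_true (List.all_eq_true.1 h i hi)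
  · right
    apply Finset.eq_of_subset_of_card_le
    · intro x hx
      rcases Finset.mem_image.1 hx with ⟨y, hy, rfl⟩
      rw [List.mem_toFinset] at hy
      rw [hc, List.mem_toFinset]
      exact of_decide_eq_true (List.all_eq_true.1 h y hy)
    · rw [Finset.card_image_of_injective _ g.injective]; exact hcard

lemma memC_of_okCb {g : P6} {T : List P6} (h : okCb g T = true) :
    g ∈ stabC T.toFinset := by
  show T.toFinset.image (conjMap g) = T.toFinset
  apply Finset.eq_of_subset_of_card_le
  · intro x hx
    rcases Finset.mem_image.1 hx with ⟨m, hm, rfl⟩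
    rw [List.mem_toFinset] at hm
    have h1 := List.all_eq_true.1 h m hm
    rcases List.any_eq_true.1 h1 with ⟨n, hn, he⟩
    have h2 : g * m = n * g := by
      apply Equiv.ext
      intro x
      have := List.all_eq_true.1 he x (List.mem_finRange x)
      exact of_decide_eq_true this
    have h3 : conjMap g m = n := by
      simp only [conjMap]
      rw [h2]
      group
    rw [h3, List.mem_toFinset]
    exact hn
  · rw [Finset.card_image_of_injective]
    intro x y hxy
    simpa [conjMap, mul_assoc] using hxy

/-! ### Properness witnesses -/

lemma wP' : ∀ p ∈ SP, Equiv.Perm.sign p.2 = 1 ∧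
    ¬ (p.1.toFinset.image ⇑p.2 = p.1.toFinset) := by decide

lemma wP : ∀ p ∈ SP, Equiv.Perm.sign p.2 = 1 ∧ p.2 ∉ stabP p.1.toFinset := by
  intro p hp
  obtain ⟨h1, h2⟩ := wP' p hp
  exact ⟨h1, h2⟩

lemma wQ' : ∀ p ∈ SQ, Equiv.Perm.sign p.2.2 = 1 ∧
    p.1.toFinsetᶜ = p.2.1.toFinset ∧
    (p.1.toFinset)ᶜ.card ≤ p.1.toFinset.card ∧
    ¬ (p.1.toFinset.image ⇑p.2.2 = p.1.toFinset ∨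
       p.1.toFinset.image ⇑p.2.2 = p.1.toFinsetᶜ) := by decide

lemma wQ : ∀ p ∈ SQ, Equiv.Perm.sign p.2.2 = 1 ∧
    p.1.toFinsetᶜ = p.2.1.toFinset ∧
    (p.1.toFinset)ᶜ.card ≤ p.1.toFinset.card ∧
    p.2.2 ∉ stabQ p.1.toFinset := by
  intro p hp
  obtain ⟨h1, h2, h3, h4⟩ := wQ' p hp
  exact ⟨h1, h2, h3, h4⟩

lemma wC' : ∀ p ∈ SC, Equiv.Perm.sign p.2 = 1 ∧
    ¬ (p.1.toFinset.image (conjMap p.2) = p.1.toFinset) := by decide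

lemma wC : ∀ p ∈ SC, Equiv.Perm.sign p.2 = 1 ∧ p.2 ∉ stabC p.1.toFinset := by
  intro p hp
  obtain ⟨h1, h2⟩ := wC' p hp
  exact ⟨h1, h2⟩

/-- generic properness argument -/
lemma closure_ne (H : Subgroup P6) {σ τ g : P6} (hσ : σ ∈ H) (hτ : τ ∈ H)
    (hg : Equiv.Perm.sign g = 1) (hgH : g ∉ H) :
    Subgroup.closure {σ, τ} ≠ alternatingGroup (Fin 6) := by
  intro h
  have hle : Subgroup.closure {σ, τ} ≤ H := by
    apply (Subgroup.closure_le H).2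
    intro x hx
    rcases hx with rfl | rfl
    · exact hσ
    · exact hτ
  exact hgH (hle (h ▸ (Equiv.Perm.mem_alternatingGroup.2 hg)))

lemma good_ne {σ τ : P6} (h : goodb σ τ = true) :
    Subgroup.closure {σ, τ} ≠ alternatingGroup (Fin 6) := by
  unfold goodb at h
  rw [Bool.or_eq_true] at h
  rcases h with h | h
  swap
  · rcases List.any_eq_true.1 h with ⟨p, hp, he⟩
    obtain ⟨h1, h2⟩ := (Bool.and_eq_true _ _).mp he
    obtain ⟨hs, hn⟩ := wC p hp
    exact closure_ne (stabC p.1.toFinset) (memC_of_okCb h1) (memC_of_okCb h2) hs hn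
  rw [Bool.or_eq_true] at h
  rcases h with h | h
  · rcases List.any_eq_true.1 h with ⟨p, hp, he⟩
    obtain ⟨h1, h2⟩ := (Bool.and_eq_true _ _).mp he
    obtain ⟨hs, hn⟩ := wP p hp
    exact closure_ne (stabP p.1.toFinset) (memP_of_okPb h1) (memP_of_okPb h2) hs hn
  · rcases List.any_eq_true.1 h with ⟨p, hp, he⟩
    obtain ⟨h1, h2⟩ := (Bool.and_eq_true _ _).mp he
    obtain ⟨hs, hc, hcard, hn⟩ := wQ p hp
    exact closure_ne (stabQ p.1.toFinset) (memQ_of_okQb hc hcard h1)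
      (memQ_of_okQb hc hcard h2) hs hn

/-- In the alternating group `A₆` on six points, every element generates a proper
subgroup together with at least one of the three double transpositions
`(1,2)(3,4)`, `(1,3)(2,4)`, `(1,4)(2,3)`. -/
theorem stmt_10 :
    ∀ σ ∈ alternatingGroup (Fin 6),
      ∃ τ ∈ ({Equiv.swap 0 1 * Equiv.swap 2 3,
              Equiv.swap 0 2 * Equiv.swap 1 3,
              Equiv.swap 0 3 * Equiv.swap 1 2} : Set (Equiv.Perm (Fin 6))),
        Subgroup.closure {σ, τ} ≠ alternatingGroup (Fin 6) := by
  intro σ hσ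
  rw [Equiv.Perm.mem_alternatingGroup] at hσ
  have h := key σ hσ
  rw [Bool.or_eq_true] at h
  rcases h with h | h
  · rw [Bool.or_eq_true] at h
    rcases h with h | h
    · exact ⟨ta, Or.inl rfl, good_ne h⟩
    · exact ⟨tb, Or.inr (Or.inl rfl), good_ne h⟩
  · exact ⟨tc, Or.inr (Or.inr rfl), good_ne h⟩
end
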